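/- arXiv:1810.07933 — 4 statements merged into one kernel-verified Lean document; each statement's English description precedes it below -/
import Mathlib

section
/- Let H be a Hilbert space, A : H → H a bounded self-adjoint operator, and W, V closed subspaces of H. Assume (1) there is ε₁ > 0 with (Ax, x) < -ε₁‖x‖² for all nonzero x ∈ W, (2) (Ax, x) > 0 for all nonzero x in the orthogonal complement V⊥, and (3) (Ax, y) = 0 for all x ∈ V, y ∈ V⊥. Then the restriction of the orthogonal projection P_V onto V to the subspace W is injective, and the image P_V(W) is a closed subspace of H. -/
/-!
Write `x = p + q` with `p = P_V x` and `q ∈ Vᗮ`. Self-adjointness and (3) kill the cross terms, so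
`⟪A x, x⟫ = ⟪A p, p⟫ + ⟪A q, q⟫ ≥ -‖A‖ ‖P_V x‖²` by (2). Against (1) this gives
`ε₁ ‖x‖² ≤ ‖A‖ ‖P_V x‖²` on `W`: the projection is bounded below on the complete space `W`,
hence injective there with closed image.
-/
open RealInnerProductSpace

namespace ContinuousLinearMap

variable {𝕜 E F : Type*} [NontriviallyNormedField 𝕜] [NormedAddCommGroup E] [NormedSpace 𝕜 E]
  [NormedAddCommGroup F] [NormedSpace 𝕜 F] (f : E →L[𝕜] F) {W : Submodule 𝕜 E} {K : ℝ}

theorem injOn_of_norm_le_mul_norm (hK : ∀ x ∈ W, ‖x‖ ≤ K * ‖f x‖) : Set.InjOn f W := by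
  intro x hx y hy hxy
  have := hK (x - y) (W.sub_mem hx hy)
  rw [map_sub, hxy, sub_self, norm_zero, mul_zero] at this
  exact sub_eq_zero.mp (norm_le_zero_iff.mp this)

theorem isClosed_image_of_norm_le_mul_norm [CompleteSpace E] (hW : IsClosed (W : Set E))
    (hK : ∀ x ∈ W, ‖x‖ ≤ K * ‖f x‖) : IsClosed (f '' W) := by
  have : CompleteSpace W := hW.completeSpace_coe
  have hbound : ∀ x : W, ‖x‖ ≤ K.toNNReal * ‖f.comp W.subtypeL x‖ := fun x =>
    (hK x x.2).trans (mul_le_mul_of_nonneg_right (Real.le_coe_toNNReal K) (norm_nonneg _))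
  rw [Set.image_eq_range]
  exact ((f.comp W.subtypeL).antilipschitz_of_bound hbound).isClosed_range
    (f.comp W.subtypeL).uniformContinuous

end ContinuousLinearMap

theorem le_sqrt_div_mul_of_mul_sq_le {a b c ε : ℝ} (hε : 0 < ε) (hb : 0 ≤ b)
    (h : ε * a ^ 2 ≤ c * b ^ 2) : a ≤ √(c / ε) * b := by
  have hsq : a ^ 2 ≤ c / ε * b ^ 2 := by
    rw [div_mul_eq_mul_div, le_div_iff₀ hε]; linarith
  calc a ≤ |a| := le_abs_self a
    _ ≤ √(c / ε * b ^ 2) := Real.abs_le_sqrt hsq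
    _ = √(c / ε) * b := by rw [Real.sqrt_mul' _ (sq_nonneg b), Real.sqrt_sq hb]

section SelfAdjoint

variable {H : Type*} [NormedAddCommGroup H] [InnerProductSpace ℝ H]

theorem ContinuousLinearMap.neg_opNorm_mul_sq_le_inner_map_self (A : H →L[ℝ] H) (x : H) :
    -(‖A‖ * ‖x‖ ^ 2) ≤ ⟪A x, x⟫ := by
  have hcs := (abs_le.mp (abs_real_inner_le_norm (A x) x)).1
  have hop : ‖A x‖ * ‖x‖ ≤ ‖A‖ * ‖x‖ ^ 2 := by
    rw [sq, ← mul_assoc]; gcongr; exact A.le_opNorm x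
  linarith

variable {A : H →L[ℝ] H} {V : Submodule ℝ H}

theorem inner_map_add_self_of_mem_orthogonal (hA : ∀ x y : H, ⟪A x, y⟫ = ⟪x, A y⟫)
    (hV : ∀ x ∈ V, ∀ y ∈ Vᗮ, ⟪A x, y⟫ = 0) {p q : H} (hp : p ∈ V) (hq : q ∈ Vᗮ) :
    ⟪A (p + q), p + q⟫ = ⟪A p, p⟫ + ⟪A q, q⟫ := by
  have hpq : ⟪A p, q⟫ = 0 := hV p hp q hq
  have hqp : ⟪A q, p⟫ = 0 := by rw [hA, real_inner_comm, hpq]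
  rw [map_add, inner_add_left, inner_add_right, inner_add_right, hpq, hqp]
  ring

theorem neg_opNorm_mul_norm_starProjection_sq_le [V.HasOrthogonalProjection]
    (hA : ∀ x y : H, ⟪A x, y⟫ = ⟪x, A y⟫) (hV : ∀ x ∈ V, ∀ y ∈ Vᗮ, ⟪A x, y⟫ = 0)
    (hVperp : ∀ x ∈ Vᗮ, x ≠ 0 → 0 < ⟪A x, x⟫) (x : H) :
    -(‖A‖ * ‖V.starProjection x‖ ^ 2) ≤ ⟪A x, x⟫ := by
  set p := V.starProjection x
  have hq : x - p ∈ Vᗮ := V.sub_starProjection_mem_orthogonal x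
  have hAq : 0 ≤ ⟪A (x - p), x - p⟫ := by
    rcases eq_or_ne (x - p) 0 with h | h
    · simp [h]
    · exact (hVperp _ hq h).le
  have hsplit := inner_map_add_self_of_mem_orthogonal hA hV (V.starProjection_apply_mem x) hq
  rw [add_sub_cancel] at hsplit
  linarith [A.neg_opNorm_mul_sq_le_inner_map_self p]

end SelfAdjoint

theorem stmt_0 {H : Type*} [NormedAddCommGroup H] [InnerProductSpace ℝ H] [CompleteSpace H]
    (A : H →L[ℝ] H) (hA : ∀ x y : H, ⟪A x, y⟫ = ⟪x, A y⟫)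
    (W V : Submodule ℝ H) (hWclosed : IsClosed (W : Set H)) [CompleteSpace V]
    (ε₁ : ℝ) (hε₁ : 0 < ε₁)
    (h1 : ∀ x ∈ W, x ≠ 0 → ⟪A x, x⟫ < -ε₁ * ‖x‖ ^ 2)
    (h2 : ∀ x ∈ Vᗮ, x ≠ 0 → 0 < ⟪A x, x⟫)
    (h3 : ∀ x ∈ V, ∀ y ∈ Vᗮ, ⟪A x, y⟫ = 0) :
    Set.InjOn (fun x : H => (V.orthogonalProjectionOnto x : H)) (W : Set H) ∧
    IsClosed ((fun x : H => (V.orthogonalProjectionOnto x : H)) '' (W : Set H)) := by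
  have hcoercive : ∀ x ∈ W, ‖x‖ ≤ √(‖A‖ / ε₁) * ‖V.starProjection x‖ := by
    intro x hx
    refine le_sqrt_div_mul_of_mul_sq_le hε₁ (norm_nonneg _) ?_
    have hlower := neg_opNorm_mul_norm_starProjection_sq_le hA h3 h2 x
    rcases eq_or_ne x 0 with rfl | hx0
    · simp
    · linarith [h1 x hx hx0]
  exact ⟨V.starProjection.injOn_of_norm_le_mul_norm hcoercive,
    V.starProjection.isClosed_image_of_norm_le_mul_norm hWclosed hcoercive⟩
end

section
/- Let H be a Hilbert space, A : H → H a bounded self-adjoint operator, W, V closed subspaces of H, satisfying: (1) there is ε₁ > 0 with (Ax,x) < -ε₁‖x‖² for all nonzero x ∈ W; (2) (Ax,x) > 0 for all nonzero x ∈ V⊥; (3) (Ax,y) = 0 for all x ∈ V, y ∈ V⊥; (4) (Ax,x) ≤ 0 for all x ∈ V. Suppose further there is a closed subspace U of W⊥ such that W⊥/U is finite dimensional and (Ax,x) > 0 for all nonzero x ∈ U. Then P_V : W → V and P_W : V → W are both Fredholm operators and ind(P_W : V → W) = -ind(P_V : W → V). -/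
open RealInnerProductSpace

/-- A bounded operator is Fredholm if its kernel is finite dimensional and its range is
closed with finite dimensional cokernel. -/
def IsFredholm {X Y : Type*} [NormedAddCommGroup X] [NormedAddCommGroup Y]
    [NormedSpace ℝ X] [NormedSpace ℝ Y] (T : X →L[ℝ] Y) : Prop :=
  FiniteDimensional ℝ (LinearMap.ker (T : X →ₗ[ℝ] Y)) ∧ IsClosed ((LinearMap.range (T : X →ₗ[ℝ] Y) : Submodule ℝ Y) : Set Y) ∧
    FiniteDimensional ℝ (Y ⧸ LinearMap.range (T : X →ₗ[ℝ] Y))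

/-- The Fredholm index: dim ker minus dim coker. -/
noncomputable def fredholmIndex {X Y : Type*} [NormedAddCommGroup X] [NormedAddCommGroup Y]
    [NormedSpace ℝ X] [NormedSpace ℝ Y] (T : X →L[ℝ] Y) : ℤ :=
  (Module.finrank ℝ (LinearMap.ker (T : X →ₗ[ℝ] Y)) : ℤ) - (Module.finrank ℝ (Y ⧸ LinearMap.range (T : X →ₗ[ℝ] Y)) : ℤ)

/-- The orthogonal projection of `H` onto `Y`, restricted to `X`. -/
noncomputable def projB {H : Type*} [NormedAddCommGroup H] [InnerProductSpace ℝ H]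
    [CompleteSpace H] (X Y : Submodule ℝ H) [CompleteSpace Y] : X →L[ℝ] Y :=
  (Y.orthogonalProjectionOnto).comp X.subtypeL

/-!
For `x ∈ W` write `x = v + w` with `v = P_V x` and `w ∈ Vᗮ`. Since `A` does not mix `V` and `Vᗮ`
and is nonnegative on `Vᗮ`, `-ε‖x‖² ≥ ⟪Ax, x⟫ = ⟪Av, v⟫ + ⟪Aw, w⟫ ≥ -‖A‖‖v‖²`, so `S = P_V : W → V`
is bounded below: it is injective with closed range. Its adjoint is `P_W : V → W`, whose kernel
`V ∩ Wᗮ` embeds into `Wᗮ / U` because `A` is negative semidefinite on `V` and positive definite on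
`U`. For a bounded-below `S` with `dim ker S† < ∞`, the cokernel of `S` is `(range S)ᗮ = ker S†`
and `S†` is onto, so both are Fredholm, with indices `-dim ker S†` and `dim ker S†`.
-/

open scoped InnerProduct NNReal

theorem ContinuousLinearMap.antilipschitzWith_sqrt_of_sq_le {E F : Type*}
    [SeminormedAddCommGroup E] [SeminormedAddCommGroup F] [NormedSpace ℝ E] [NormedSpace ℝ F]
    (f : E →L[ℝ] F) {C : ℝ≥0} (h : ∀ x, ‖x‖ ^ 2 ≤ C * ‖f x‖ ^ 2) :
    AntilipschitzWith (NNReal.sqrt C) f := by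
  refine f.antilipschitz_of_bound fun x ↦ ?_
  refine (pow_le_pow_iff_left₀ (norm_nonneg _) (by positivity) two_ne_zero).mp ?_
  rw [mul_pow, ← NNReal.coe_pow, NNReal.sq_sqrt]
  exact h x

theorem AntilipschitzWith.isClosed_linearMap_range {E F : Type*} [NormedAddCommGroup E]
    [NormedSpace ℝ E] [CompleteSpace E] [NormedAddCommGroup F] [NormedSpace ℝ F]
    {S : E →L[ℝ] F} {K : ℝ≥0} (hS : AntilipschitzWith K S) : IsClosed (S.range : Set F) := by
  rw [LinearMap.coe_range]
  exact hS.isClosed_range S.uniformContinuous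

section Adjoint

variable {E F : Type*} [NormedAddCommGroup E] [InnerProductSpace ℝ E] [CompleteSpace E]
  [NormedAddCommGroup F] [InnerProductSpace ℝ F] [CompleteSpace F]

noncomputable def ContinuousLinearMap.quotientRangeEquivKerAdjoint (S : E →L[ℝ] F)
    (hS : IsClosed (S.range : Set F)) : (F ⧸ S.range) ≃ₗ[ℝ] (S†).ker :=
  haveI := hS.completeSpace_coe
  (Submodule.quotientEquivOfIsCompl _ _ (Submodule.isCompl_orthogonal _)).trans
    (LinearEquiv.ofEq _ _ S.orthogonal_range)

namespace AntilipschitzWith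

variable {S : E →L[ℝ] F} {K : ℝ≥0}

theorem adjoint_comp_self (hS : AntilipschitzWith K S) :
    AntilipschitzWith (K ^ 2) (S† ∘L S) := by
  refine ContinuousLinearMap.antilipschitz_of_bound _ fun x ↦ ?_
  have hx := S.bound_of_antilipschitz hS x
  have hSx : ‖S x‖ ^ 2 ≤ ‖(S† ∘L S) x‖ * ‖x‖ := by
    rw [← real_inner_self_eq_norm_sq, ← ContinuousLinearMap.adjoint_inner_left]
    exact real_inner_le_norm _ _
  have hSx' : ‖S x‖ ≤ K * ‖(S† ∘L S) x‖ := by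
    rcases (norm_nonneg (S x)).eq_or_lt with h0 | hpos
    · rw [← h0]; positivity
    refine le_of_mul_le_mul_right ?_ hpos
    calc ‖S x‖ * ‖S x‖ = ‖S x‖ ^ 2 := (sq _).symm
      _ ≤ ‖(S† ∘L S) x‖ * ‖x‖ := hSx
      _ ≤ ‖(S† ∘L S) x‖ * (K * ‖S x‖) := by gcongr
      _ = K * ‖(S† ∘L S) x‖ * ‖S x‖ := by ring
  calc ‖x‖ ≤ K * ‖S x‖ := hx
    _ ≤ K * (K * ‖(S† ∘L S) x‖) := by gcongr
    _ = ↑(K ^ 2) * ‖(S† ∘L S) x‖ := by push_cast; ring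

/- `S† ∘L S` is bounded below and its range is dense (its orthogonal is `ker S = ⊥`),
so it is onto, and so is `S†`. -/
theorem range_adjoint_eq_top (hS : AntilipschitzWith K S) : (S†).range = ⊤ := by
  have hclosed := hS.adjoint_comp_self.isClosed_range (S† ∘L S).uniformContinuous
  have : CompleteSpace (S† ∘L S).range := hclosed.completeSpace_coe
  have hdense : (S† ∘L S).rangeᗮ = ⊥ := by
    rw [ContinuousLinearMap.orthogonal_range, ContinuousLinearMap.adjoint_comp,
      ContinuousLinearMap.adjoint_adjoint, ContinuousLinearMap.ker_adjoint_comp_self,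
      LinearMap.ker_eq_bot]
    exact hS.injective
  rw [Submodule.orthogonal_eq_bot_iff] at hdense
  exact top_le_iff.mp (hdense ▸ LinearMap.range_comp_le_range _ _)

theorem isFredholm (hS : AntilipschitzWith K S) [FiniteDimensional ℝ (S†).ker] :
    IsFredholm S := by
  have hclosed := hS.isClosed_linearMap_range
  refine ⟨?_, hclosed, (S.quotientRangeEquivKerAdjoint hclosed).symm.finiteDimensional⟩
  rw [LinearMap.ker_eq_bot.mpr hS.injective]
  infer_instance

theorem isFredholm_adjoint (hS : AntilipschitzWith K S) [FiniteDimensional ℝ (S†).ker] :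
    IsFredholm (S†) := by
  refine ⟨inferInstance, ?_, ?_⟩ <;> rw [hS.range_adjoint_eq_top]
  · exact isClosed_univ
  · infer_instance

theorem fredholmIndex_adjoint (hS : AntilipschitzWith K S) :
    fredholmIndex (S†) = -fredholmIndex S := by
  rw [fredholmIndex, fredholmIndex, hS.range_adjoint_eq_top,
    LinearMap.ker_eq_bot.mpr hS.injective,
    (S.quotientRangeEquivKerAdjoint hS.isClosed_linearMap_range).finrank_eq, finrank_bot,
    Module.finrank_zero_of_subsingleton (M := E ⧸ (⊤ : Submodule ℝ E))]
  simp

end AntilipschitzWith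

end Adjoint

theorem neg_opNorm_mul_sq_le_inner_self {H : Type*} [NormedAddCommGroup H]
    [InnerProductSpace ℝ H] {A : H →L[ℝ] H} (hA : (A : H →ₗ[ℝ] H).IsSymmetric)
    {V : Submodule ℝ H} [V.HasOrthogonalProjection] (hVperp : ∀ x ∈ Vᗮ, 0 ≤ ⟪A x, x⟫)
    (hAV : ∀ x ∈ V, ∀ y ∈ Vᗮ, ⟪A x, y⟫ = 0) (x : H) :
    -(‖A‖ * ‖V.starProjection x‖ ^ 2) ≤ ⟪A x, x⟫ := by
  set v := V.starProjection x
  set w := x - v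
  have hw : w ∈ Vᗮ := V.sub_starProjection_mem_orthogonal x
  have hvw : ⟪A v, w⟫ = 0 := hAV v (V.starProjection_apply_mem x) w hw
  have hwv : ⟪A w, v⟫ = 0 := (hA w v).trans ((real_inner_comm _ _).trans hvw)
  have hsplit : ⟪A x, x⟫ = ⟪A v, v⟫ + ⟪A w, w⟫ := by
    have hx : x = v + w := (add_sub_cancel v x).symm
    clear_value v w
    subst hx
    simp only [map_add, inner_add_left, inner_add_right, hvw, hwv]
    ring
  have hvv : -(‖A‖ * ‖v‖ ^ 2) ≤ ⟪A v, v⟫ := by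
    have := A.le_opNorm v
    nlinarith [neg_abs_le ⟪A v, v⟫, abs_real_inner_le_norm (A v) v, norm_nonneg v]
  linarith [hVperp w hw]

section projB

variable {H : Type*} [NormedAddCommGroup H] [InnerProductSpace ℝ H] [CompleteSpace H]

theorem projB_adjoint (X Y : Submodule ℝ H) [CompleteSpace X] [CompleteSpace Y] :
    (projB X Y)† = projB Y X := by
  refine ((ContinuousLinearMap.eq_adjoint_iff _ _).mpr fun y x ↦ ?_).symm
  simp [projB]

theorem mem_ker_projB_iff {X Y : Submodule ℝ H} [CompleteSpace Y] {x : X} :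
    x ∈ (projB X Y).ker ↔ (x : H) ∈ Yᗮ := by
  simp [projB]

theorem finiteDimensional_ker_projB {X Y U : Submodule ℝ H} [CompleteSpace Y]
    (hXU : Disjoint X U) [FiniteDimensional ℝ (Yᗮ ⧸ U.comap Yᗮ.subtype)] :
    FiniteDimensional ℝ (projB X Y).ker := by
  let toOrthogonal : (projB X Y).ker →ₗ[ℝ] Yᗮ :=
    LinearMap.codRestrict Yᗮ (X.subtype ∘ₗ (projB X Y).ker.subtype)
      fun x ↦ mem_ker_projB_iff.mp x.2
  refine Module.Finite.of_injective ((U.comap Yᗮ.subtype).mkQ ∘ₗ toOrthogonal) ?_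
  rw [← LinearMap.ker_eq_bot, LinearMap.ker_eq_bot']
  intro x hx
  have hxU : ((x : X) : H) ∈ U := (Submodule.Quotient.mk_eq_zero (U.comap Yᗮ.subtype)).mp hx
  exact Subtype.ext (Subtype.ext (Submodule.disjoint_def.mp hXU _ (x : X).2 hxU))

theorem exists_antilipschitzWith_projB {A : H →L[ℝ] H} (hA : (A : H →ₗ[ℝ] H).IsSymmetric)
    {W V : Submodule ℝ H} [CompleteSpace V] {ε : ℝ} (hε : 0 < ε)
    (hW : ∀ x ∈ W, ⟪A x, x⟫ ≤ -ε * ‖x‖ ^ 2) (hVperp : ∀ x ∈ Vᗮ, 0 ≤ ⟪A x, x⟫)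
    (hAV : ∀ x ∈ V, ∀ y ∈ Vᗮ, ⟪A x, y⟫ = 0) :
    ∃ K, AntilipschitzWith K (projB W V) := by
  refine ⟨_, (projB W V).antilipschitzWith_sqrt_of_sq_le (C := (‖A‖ / ε).toNNReal) fun x ↦ ?_⟩
  have hlower := neg_opNorm_mul_sq_le_inner_self hA hVperp hAV x
  have hupper := hW x x.2
  have hnorm : ‖projB W V x‖ = ‖V.starProjection x‖ := rfl
  rw [Real.coe_toNNReal _ (by positivity), hnorm, div_mul_eq_mul_div, le_div_iff₀ hε]
  change ‖(x : H)‖ ^ 2 * ε ≤ _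
  linarith

end projB

theorem stmt_1_general {H : Type*} [NormedAddCommGroup H] [InnerProductSpace ℝ H] [CompleteSpace H]
    (A : H →L[ℝ] H) (hA : ∀ x y : H, ⟪A x, y⟫ = ⟪x, A y⟫)
    (W V U : Submodule ℝ H) [CompleteSpace W] [CompleteSpace V]
    (hquot : FiniteDimensional ℝ (↥Wᗮ ⧸ U.comap Wᗮ.subtype))
    (ε₁ : ℝ) (hε₁ : 0 < ε₁)
    (h1 : ∀ x ∈ W, x ≠ 0 → ⟪A x, x⟫ < -ε₁ * ‖x‖ ^ 2)
    (h2 : ∀ x ∈ Vᗮ, x ≠ 0 → 0 < ⟪A x, x⟫)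
    (h3 : ∀ x ∈ V, ∀ y ∈ Vᗮ, ⟪A x, y⟫ = 0)
    (h4 : ∀ x ∈ V, ⟪A x, x⟫ ≤ 0)
    (h6 : ∀ x ∈ U, x ≠ 0 → 0 < ⟪A x, x⟫) :
    IsFredholm (projB W V) ∧ IsFredholm (projB V W) ∧
      fredholmIndex (projB V W) = -fredholmIndex (projB W V) := by
  have hW : ∀ x ∈ W, ⟪A x, x⟫ ≤ -ε₁ * ‖x‖ ^ 2 := fun x hx ↦ by
    rcases eq_or_ne x 0 with rfl | hx0
    · simp
    · exact (h1 x hx hx0).le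
  have hVperp : ∀ x ∈ Vᗮ, 0 ≤ ⟪A x, x⟫ := fun x hx ↦ by
    rcases eq_or_ne x 0 with rfl | hx0
    · simp
    · exact (h2 x hx hx0).le
  have hVU : Disjoint V U := Submodule.disjoint_def.mpr fun x hxV hxU ↦ by
    by_contra hx0
    exact (h4 x hxV).not_gt (h6 x hxU hx0)
  obtain ⟨K, hK⟩ := exists_antilipschitzWith_projB hA hε₁ hW hVperp h3
  have : FiniteDimensional ℝ ((projB W V)†).ker := by
    rw [projB_adjoint]
    exact finiteDimensional_ker_projB hVU
  rw [← projB_adjoint W V]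
  exact ⟨hK.isFredholm, hK.isFredholm_adjoint, hK.fredholmIndex_adjoint⟩

theorem stmt_1 {H : Type*} [NormedAddCommGroup H] [InnerProductSpace ℝ H] [CompleteSpace H]
    (A : H →L[ℝ] H) (hA : ∀ x y : H, ⟪A x, y⟫ = ⟪x, A y⟫)
    (W V U : Submodule ℝ H) [CompleteSpace W] [CompleteSpace V]
    (hUclosed : IsClosed (U : Set H)) (hUW : U ≤ Wᗮ)
    (hquot : FiniteDimensional ℝ (↥Wᗮ ⧸ U.comap Wᗮ.subtype))
    (ε₁ : ℝ) (hε₁ : 0 < ε₁)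
    (h1 : ∀ x ∈ W, x ≠ 0 → ⟪A x, x⟫ < -ε₁ * ‖x‖ ^ 2)
    (h2 : ∀ x ∈ Vᗮ, x ≠ 0 → 0 < ⟪A x, x⟫)
    (h3 : ∀ x ∈ V, ∀ y ∈ Vᗮ, ⟪A x, y⟫ = 0)
    (h4 : ∀ x ∈ V, ⟪A x, x⟫ ≤ 0)
    (h6 : ∀ x ∈ U, x ≠ 0 → 0 < ⟪A x, x⟫) :
    IsFredholm (projB W V) ∧ IsFredholm (projB V W) ∧
      fredholmIndex (projB V W) = -fredholmIndex (projB W V) :=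
  stmt_1_general A hA W V U hquot ε₁ hε₁ h1 h2 h3 h4 h6
end

section
/- Let H be a Hilbert space, A a bounded self-adjoint operator on H, W a closed subspace with (Ax,x) < -ε₁‖x‖² for all nonzero x ∈ W (ε₁ > 0), and V a closed subspace with (Ax,x) > 0 for all nonzero x ∈ V⊥ and (Ax,y) = 0 for all x ∈ V, y ∈ V⊥. Then ‖P_V x‖ ≥ √(ε₁/‖A‖) ‖x‖ for all x ∈ W. -/
/-!
Split `x = v + w` with `v = P_V x` and `w ∈ Vᗮ`. Since `V` and `Vᗮ` are `A`-orthogonal,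
`⟪A x, x⟫ = ⟪A v, v⟫ + ⟪A w, w⟫ ≥ ⟪A v, v⟫ ≥ -‖A‖ ‖v‖²`, while `⟪A x, x⟫ ≤ -ε₁ ‖x‖²` on `W`.
Hence `ε₁ ‖x‖² ≤ ‖A‖ ‖v‖²`.
-/

open RealInnerProductSpace

lemma Real.sqrt_div_mul_le_of_mul_sq_le {a b c d : ℝ} (hb : 0 ≤ b) (hc : 0 ≤ c) (hd : 0 ≤ d)
    (h : a * c ^ 2 ≤ b * d ^ 2) : √(a / b) * c ≤ d :=
  calc √(a / b) * c = √(a / b * c ^ 2) := by rw [Real.sqrt_mul' _ (sq_nonneg c), Real.sqrt_sq hc]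
    _ ≤ √(d ^ 2) := Real.sqrt_le_sqrt <| by
        rw [div_mul_eq_mul_div]; exact div_le_of_le_mul₀ hb (sq_nonneg d) (by linarith)
    _ = d := Real.sqrt_sq hd

section

variable {E : Type*} [NormedAddCommGroup E] [InnerProductSpace ℝ E]

lemma ContinuousLinearMap.neg_opNorm_mul_sq_le_inner_apply_self (A : E →L[ℝ] E) (x : E) :
    -(‖A‖ * ‖x‖ ^ 2) ≤ ⟪A x, x⟫ :=
  calc -(‖A‖ * ‖x‖ ^ 2) = -(‖A‖ * ‖x‖ * ‖x‖) := by ring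
    _ ≤ -(‖A x‖ * ‖x‖) := by gcongr; exact A.le_opNorm x
    _ ≤ ⟪A x, x⟫ := neg_le_of_abs_le (abs_real_inner_le_norm _ _)

lemma LinearMap.IsSymmetric.inner_apply_add_self {A : E →ₗ[ℝ] E} (hA : A.IsSymmetric)
    {v w : E} (hvw : ⟪A v, w⟫ = 0) : ⟪A (v + w), v + w⟫ = ⟪A v, v⟫ + ⟪A w, w⟫ := by
  have hwv : ⟪A w, v⟫ = 0 := by rw [hA, real_inner_comm, hvw]
  simp only [map_add, inner_add_left, inner_add_right, hvw, hwv]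
  ring

lemma LinearMap.IsSymmetric.inner_apply_starProjection_self_le {A : E →ₗ[ℝ] E}
    (hA : A.IsSymmetric) (V : Submodule ℝ E) [V.HasOrthogonalProjection]
    (hpos : ∀ y ∈ Vᗮ, 0 ≤ ⟪A y, y⟫) (hV : ∀ x ∈ V, ∀ y ∈ Vᗮ, ⟪A x, y⟫ = 0) (x : E) :
    ⟪A (V.starProjection x), V.starProjection x⟫ ≤ ⟪A x, x⟫ := by
  set v := V.starProjection x
  have hw : x - v ∈ Vᗮ := V.sub_starProjection_mem_orthogonal x
  have hsplit := hA.inner_apply_add_self (hV v (V.starProjection_apply_mem x) _ hw)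
  rw [add_sub_cancel] at hsplit
  linarith [hpos _ hw]

end

theorem stmt_2_general {H : Type*} [NormedAddCommGroup H] [InnerProductSpace ℝ H]
    (A : H →L[ℝ] H) (hA : ∀ x y : H, ⟪A x, y⟫ = ⟪x, A y⟫)
    (W V : Submodule ℝ H) [CompleteSpace V]
    (ε₁ : ℝ)
    (h1 : ∀ x ∈ W, x ≠ 0 → ⟪A x, x⟫ < -ε₁ * ‖x‖ ^ 2)
    (h2 : ∀ x ∈ Vᗮ, x ≠ 0 → 0 < ⟪A x, x⟫)
    (h3 : ∀ x ∈ V, ∀ y ∈ Vᗮ, ⟪A x, y⟫ = 0) :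
    ∀ x ∈ W, Real.sqrt (ε₁ / ‖A‖) * ‖x‖ ≤ ‖(V.orthogonalProjectionOnto x : H)‖ := by
  intro x hx
  have hpos : ∀ y ∈ Vᗮ, 0 ≤ ⟪A y, y⟫ := fun y hy ↦ by
    rcases eq_or_ne y 0 with rfl | hy0
    · simp
    · exact (h2 y hy hy0).le
  have hW : ⟪A x, x⟫ ≤ -ε₁ * ‖x‖ ^ 2 := by
    rcases eq_or_ne x 0 with rfl | hx0
    · simp
    · exact (h1 x hx hx0).le
  have hproj := LinearMap.IsSymmetric.inner_apply_starProjection_self_le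
    (A := (A : H →ₗ[ℝ] H)) hA V hpos h3 x
  have hbound := A.neg_opNorm_mul_sq_le_inner_apply_self (V.starProjection x)
  rw [Submodule.coe_orthogonalProjectionOnto_apply]
  exact Real.sqrt_div_mul_le_of_mul_sq_le (norm_nonneg A) (norm_nonneg x) (norm_nonneg _)
    (by push_cast at hproj; linarith)

theorem stmt_2 {H : Type*} [NormedAddCommGroup H] [InnerProductSpace ℝ H] [CompleteSpace H]
    (A : H →L[ℝ] H) (hA : ∀ x y : H, ⟪A x, y⟫ = ⟪x, A y⟫) (hAne : A ≠ 0)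
    (W V : Submodule ℝ H) (hWclosed : IsClosed (W : Set H)) [CompleteSpace V]
    (ε₁ : ℝ) (hε₁ : 0 < ε₁)
    (h1 : ∀ x ∈ W, x ≠ 0 → ⟪A x, x⟫ < -ε₁ * ‖x‖ ^ 2)
    (h2 : ∀ x ∈ Vᗮ, x ≠ 0 → 0 < ⟪A x, x⟫)
    (h3 : ∀ x ∈ V, ∀ y ∈ Vᗮ, ⟪A x, y⟫ = 0) :
    ∀ x ∈ W, Real.sqrt (ε₁ / ‖A‖) * ‖x‖ ≤ ‖(V.orthogonalProjectionOnto x : H)‖ :=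
  stmt_2_general A hA W V ε₁ h1 h2 h3
end

section
/- Let H be a Hilbert space, A self-adjoint with ‖(A⁺)⁻¹ restricted appropriately‖ ≤ 1/l on the positive spectral part H⁺ (i.e., (Au, u) ≥ l‖u‖² for u ∈ H⁺ ∩ D(A)), and let F ∈ C¹(H, ℝ) with F' Lipschitz of constant l_F < l. Suppose z = z⁺ + w with z⁺ ∈ H⁺ ∩ D(A) satisfying A z⁺ = P⁺ F'(z⁺ + w), where P⁺ is the orthogonal projection onto H⁺. Then (1/2)(Az, z) − F(z) − [(1/2)(Aw, w) − F(w)] ≤ −((l − l_F)/2)‖z⁺‖². -/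
open RealInnerProductSpace

/-! The cross terms of `⟪A z, z⟫` vanish, so the left-hand side is
`½⟪A z⁺, z⁺⟫ - (F z - F w)`. The equation for `z⁺` gives `⟪A z⁺, z⁺⟫ = ⟪F' z, z⁺⟫`, and the
descent lemma for the `l_F`-Lipschitz gradient gives `F w ≤ F z - ⟪F' z, z⁺⟫ + (l_F/2)‖z⁺‖²`.
Hence the left-hand side is at most `-½⟪A z⁺, z⁺⟫ + (l_F/2)‖z⁺‖²`, and coercivity of `A` on
`H⁺` finishes. -/

theorem le_add_inner_add_sq_of_lipschitzWith_gradient {E : Type*} [NormedAddCommGroup E]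
    [InnerProductSpace ℝ E] [CompleteSpace E] {F : E → ℝ} {F' : E → E} {K : NNReal}
    (hF : ∀ x, HasGradientAt F (F' x) x) (hLip : LipschitzWith K F') (x y : E) :
    F x ≤ F y + ⟪F' y, x - y⟫ + K / 2 * ‖x - y‖ ^ 2 := by
  set u := x - y
  -- By Cauchy–Schwarz and the Lipschitz bound `g' ≤ 0` on `t ≥ 0`; `g 1 ≤ g 0` is the claim.
  set g : ℝ → ℝ := fun t ↦ F (y + t • u) - t * ⟪F' y, u⟫ - K / 2 * t ^ 2 * ‖u‖ ^ 2
  set g' : ℝ → ℝ := fun t ↦ ⟪F' (y + t • u), u⟫ - ⟪F' y, u⟫ - K * t * ‖u‖ ^ 2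
  have hg : ∀ t, HasDerivAt g (g' t) t := by
    intro t
    have hline : HasDerivAt (fun t : ℝ ↦ y + t • u) u t := by
      simpa using ((hasDerivAt_id t).smul_const u).const_add y
    have hFline : HasDerivAt (fun t ↦ F (y + t • u)) ⟪F' (y + t • u), u⟫ t := by
      exact (hF (y + t • u)).hasFDerivAt.comp_hasDerivAt t hline
    refine ((hFline.sub ((hasDerivAt_id t).mul_const ⟪F' y, u⟫)).sub
      (((hasDerivAt_pow 2 t).const_mul (K / 2 : ℝ)).mul_const (‖u‖ ^ 2))).congr_deriv ?_
    simp only [g']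
    ring
  have hg'_nonpos : ∀ t ∈ interior (Set.Ici (0 : ℝ)), g' t ≤ 0 := by
    intro t ht
    rw [interior_Ici, Set.mem_Ioi] at ht
    have hdist : ‖F' (y + t • u) - F' y‖ ≤ K * (t * ‖u‖) := by
      simpa [← dist_eq_norm, norm_smul, abs_of_pos ht] using hLip.dist_le_mul (y + t • u) y
    calc g' t = ⟪F' (y + t • u) - F' y, u⟫ - K * t * ‖u‖ ^ 2 := by
          simp only [g', inner_sub_left]
      _ ≤ ‖F' (y + t • u) - F' y‖ * ‖u‖ - K * t * ‖u‖ ^ 2 := by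
          gcongr; exact real_inner_le_norm _ _
      _ ≤ K * (t * ‖u‖) * ‖u‖ - K * t * ‖u‖ ^ 2 := by gcongr
      _ = 0 := by ring
  have hanti : AntitoneOn g (Set.Ici 0) :=
    antitoneOn_of_hasDerivWithinAt_nonpos (convex_Ici 0)
      (fun t _ ↦ (hg t).continuousAt.continuousWithinAt)
      (fun t _ ↦ (hg t).hasDerivWithinAt) hg'_nonpos
  have h10 : g 1 ≤ g 0 := hanti Set.self_mem_Ici (Set.mem_Ici.2 zero_le_one) zero_le_one
  simp only [g, one_smul, zero_smul, add_zero, u, add_sub_cancel] at h10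
  linarith

theorem LinearMap.IsSymmetric.inner_map_add_self_of_mem_orthogonal {E : Type*}
    [NormedAddCommGroup E] [InnerProductSpace ℝ E] {A : E →ₗ[ℝ] E} (hA : A.IsSymmetric)
    {K : Submodule ℝ E} (hK : ∀ u ∈ K, A u ∈ K) {u w : E} (hu : u ∈ K) (hw : w ∈ Kᗮ) :
    ⟪A (u + w), u + w⟫ = ⟪A u, u⟫ + ⟪A w, w⟫ := by
  have huw : ⟪A u, w⟫ = 0 := hw _ (hK u hu)
  have hwu : ⟪A w, u⟫ = 0 := by rw [hA, real_inner_comm, huw]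
  simp only [map_add, inner_add_left, inner_add_right, huw, hwu]
  ring

theorem stmt_14_general {H : Type*} [NormedAddCommGroup H] [InnerProductSpace ℝ H] [CompleteSpace H]
    (l lF : ℝ) (hlF : 0 ≤ lF)
    (A : H →ₗ[ℝ] H) (hsym : ∀ x y : H, ⟪A x, y⟫ = ⟪x, A y⟫)
    (Hp : Submodule ℝ H) [CompleteSpace Hp]
    (hinvariant : ∀ u ∈ Hp, A u ∈ Hp)
    (hcoer : ∀ u ∈ Hp, l * ‖u‖ ^ 2 ≤ ⟪A u, u⟫)
    (F : H → ℝ) (F' : H → H) (hF : ∀ x : H, HasGradientAt F (F' x) x)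
    (hLip : LipschitzWith (Real.toNNReal lF) F')
    (zp w : H) (hzp : zp ∈ Hp) (hw : w ∈ Hpᗮ)
    (heq : A zp = (Hp.orthogonalProjectionOnto (F' (zp + w)) : H)) :
    (1 / 2) * ⟪A (zp + w), zp + w⟫ - F (zp + w) - ((1 / 2) * ⟪A w, w⟫ - F w)
      ≤ -((l - lF) / 2) * ‖zp‖ ^ 2 := by
  have hsplit := LinearMap.IsSymmetric.inner_map_add_self_of_mem_orthogonal hsym hinvariant hzp hw
  have hcrit : ⟪A zp, zp⟫ = ⟪F' (zp + w), zp⟫ := by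
    rw [heq]
    exact (Hp.coe_inner _ ⟨zp, hzp⟩).symm.trans
      (Hp.inner_orthogonalProjectionOnto_eq_of_mem_right ⟨zp, hzp⟩ _)
  have hdescent := le_add_inner_add_sq_of_lipschitzWith_gradient hF hLip w (zp + w)
  rw [Real.coe_toNNReal lF hlF, sub_add_cancel_right, inner_neg_right, norm_neg] at hdescent
  have hcoer_zp := hcoer zp hzp
  rw [hsplit]
  linarith

theorem stmt_14 {H : Type*} [NormedAddCommGroup H] [InnerProductSpace ℝ H] [CompleteSpace H]
    (l lF : ℝ) (hlF : 0 ≤ lF) (hl : lF < l)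
    (A : H →ₗ[ℝ] H) (hsym : ∀ x y : H, ⟪A x, y⟫ = ⟪x, A y⟫)
    (Hp : Submodule ℝ H) [CompleteSpace Hp]
    (hinvariant : ∀ u ∈ Hp, A u ∈ Hp)
    (hcoer : ∀ u ∈ Hp, l * ‖u‖ ^ 2 ≤ ⟪A u, u⟫)
    (F : H → ℝ) (F' : H → H) (hF : ∀ x : H, HasGradientAt F (F' x) x)
    (hLip : LipschitzWith (Real.toNNReal lF) F')
    (zp w : H) (hzp : zp ∈ Hp) (hw : w ∈ Hpᗮ)
    (heq : A zp = (Hp.orthogonalProjectionOnto (F' (zp + w)) : H)) :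
    (1 / 2) * ⟪A (zp + w), zp + w⟫ - F (zp + w) - ((1 / 2) * ⟪A w, w⟫ - F w)
      ≤ -((l - lF) / 2) * ‖zp‖ ^ 2 :=
  stmt_14_general l lF hlF A hsym Hp hinvariant hcoer F F' hF hLip zp w hzp hw heq
end
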